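/- Excess risk decomposition under the margin condition: Let (x, y) be a random couple taking values in X × {0,1} for a measurable space X, with joint distribution P, marginal P_x, regression function eta(x) = P(y = 1 | x), Bayes rule f*(x) = 1{eta(x) ≥ 1/2}, and misclassification risk R(g) = P(y ≠ g(x)). Assume the margin condition: there exist c_M > 0 and gamma ≥ 0 such that P_x( 0 < |eta(x) − 1/2| ≤ t ) ≤ c_M·t^gamma for all t > 0. Then for every measurable eta_theta : X → R with plug-in rule f_theta(x) = 1{eta_theta(x) ≥ 1/2} and every delta > 0, R(f_theta) − R(f*) ≤ 2·c_M·delta^{1+gamma} + 2·E_x[ |eta_theta(x) − eta(x)| · 1{ |eta_theta(x) − eta(x)| > delta } ]. -/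

import Mathlib

/-!
Writing the risk as `E_x[P(y ≠ g(x) | x)]`, the excess risk of the plug-in rule is
`E_x[2 |η - 1/2| · 1{f_θ ≠ f*}]`. Where the two rules disagree, `1/2` lies between `η` and `η_θ`,
so `|η - 1/2| ≤ |η_θ - η|`. If moreover `|η - 1/2| ≤ δ`, the integrand is at most `2δ` and is
supported on the margin set, of mass at most `c_M δ^γ`; otherwise `|η_θ - η| > δ` and the
integrand is at most `2 |η_θ - η|`.
-/

open MeasureTheory Real
open scoped Classical

noncomputable section

variable {X : Type*} [MeasurableSpace X]

/-- The misclassification risk `R(g) = P(y ≠ g(x))` of a binary classifier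
`g : X → Bool` with respect to a joint distribution `P` on `X × {0,1}`. -/
def misclassRisk (P : Measure (X × Bool)) (g : X → Bool) : ℝ :=
  (P {p : X × Bool | p.2 ≠ g p.1}).toReal

/-- The plug-in classifier `x ↦ 1{η(x) ≥ 1/2}` of a function `η : X → ℝ`. -/
def plugIn (η : X → ℝ) : X → Bool :=
  fun x => if 1 / 2 ≤ η x then true else false

/-- `η` is the regression function `η(x) = P(y = 1 | x)` of the joint distribution `P`:
for every measurable `A ⊆ X`, `P(A × {1}) = ∫_A η dP_x` where `P_x` is the marginal. -/
def IsRegressionFunction (P : Measure (X × Bool)) (η : X → ℝ) : Prop :=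
  Measurable η ∧ (∀ x, 0 ≤ η x) ∧ (∀ x, η x ≤ 1) ∧
    ∀ A : Set X, MeasurableSet A →
      (P (A ×ˢ ({true} : Set Bool))).toReal = ∫ x in A, η x ∂P.fst

def condMisclassProb (η : X → ℝ) (g : X → Bool) (x : X) : ℝ :=
  if g x then 1 - η x else η x

lemma measurableSet_plugIn_eq_true {f : X → ℝ} (hf : Measurable f) :
    MeasurableSet {x | plugIn f x = true} := by
  simpa [plugIn] using measurableSet_le measurable_const hf

lemma half_mem_uIcc_of_plugIn_ne {α : Type*} {f g : α → ℝ} {x : α}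
    (h : plugIn f x ≠ plugIn g x) : 1 / 2 ∈ Set.uIcc (g x) (f x) := by
  simp only [plugIn] at h
  split_ifs at h with hf hg hg <;> simp only [ne_eq, not_true_eq_false] at h
  · exact Set.mem_uIcc.2 (.inl ⟨(not_le.1 hg).le, hf⟩)
  · exact Set.mem_uIcc.2 (.inr ⟨(not_le.1 hf).le, hg⟩)

lemma condMisclassProb_plugIn_sub {α : Type*} (η f : α → ℝ) (x : α) :
    condMisclassProb η (plugIn f) x - condMisclassProb η (plugIn η) x =
      if plugIn f x = plugIn η x then 0 else 2 * |η x - 1 / 2| := by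
  simp only [condMisclassProb, plugIn]
  split_ifs <;> simp_all
  · rw [abs_of_neg (by linarith)]; ring
  · rw [abs_of_nonneg (by linarith)]; ring

lemma condMisclassProb_plugIn_self_le {α : Type*} (η f : α → ℝ) (x : α) :
    condMisclassProb η (plugIn η) x ≤ condMisclassProb η (plugIn f) x := by
  rw [← sub_nonneg, condMisclassProb_plugIn_sub]
  split_ifs <;> positivity

lemma ofReal_condMisclassProb_plugIn_sub_le {α : Type*} (η f : α → ℝ) (δ : ℝ) (x : α) :
    ENNReal.ofReal (condMisclassProb η (plugIn f) x - condMisclassProb η (plugIn η) x) ≤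
      {x | 0 < |η x - 1 / 2| ∧ |η x - 1 / 2| ≤ δ}.indicator (fun _ ↦ ENNReal.ofReal (2 * δ)) x +
        2 * ENNReal.ofReal (|f x - η x| * if δ < |f x - η x| then 1 else 0) := by
  rw [condMisclassProb_plugIn_sub]
  by_cases hagree : plugIn f x = plugIn η x
  · simp [hagree]
  rw [if_neg hagree]
  have hle : |η x - 1 / 2| ≤ |f x - η x| :=
    (abs_sub_comm _ _).trans_le (Set.abs_sub_left_of_mem_uIcc (half_mem_uIcc_of_plugIn_ne hagree))
  rcases lt_or_ge δ |f x - η x| with hlarge | hsmall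
  · rw [if_pos hlarge, mul_one, ← ENNReal.ofReal_ofNat 2, ← ENNReal.ofReal_mul zero_le_two]
    exact le_add_left (ENNReal.ofReal_le_ofReal (by linarith))
  · rcases (abs_nonneg (η x - 1 / 2)).eq_or_lt with h0 | hpos
    · rw [← h0, mul_zero, ENNReal.ofReal_zero]
      exact zero_le
    · have hx : x ∈ {x | 0 < |η x - 1 / 2| ∧ |η x - 1 / 2| ≤ δ} := ⟨hpos, hle.trans hsmall⟩
      rw [Set.indicator_of_mem hx]
      exact le_add_right (ENNReal.ofReal_le_ofReal (by linarith))

namespace IsRegressionFunction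

variable {P : Measure (X × Bool)} {η : X → ℝ} [IsFiniteMeasure P]

lemma integrable (hη : IsRegressionFunction P η) : Integrable η P.fst :=
  .of_mem_Icc 0 1 hη.1.aemeasurable (ae_of_all _ fun x ↦ ⟨hη.2.1 x, hη.2.2.1 x⟩)

lemma integrable_condMisclassProb (hη : IsRegressionFunction P η)
    {g : X → Bool} (hg : MeasurableSet {x | g x = true}) :
    Integrable (condMisclassProb η g) P.fst := by
  refine .of_mem_Icc 0 1 (Measurable.ite hg (measurable_const.sub hη.1) hη.1).aemeasurable
    (ae_of_all _ fun x ↦ ?_)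
  have := hη.2.1 x; have := hη.2.2.1 x
  simp only [condMisclassProb]
  split_ifs <;> constructor <;> linarith

lemma measure_prod_false_toReal (hη : IsRegressionFunction P η) {A : Set X}
    (hA : MeasurableSet A) :
    (P (A ×ˢ ({false} : Set Bool))).toReal = ∫ x in A, (1 - η x) ∂P.fst := by
  have hsplit : P.fst A = P (A ×ˢ {true}) + P (A ×ˢ {false}) := by
    rw [Measure.fst_apply hA, ← measure_union _ (hA.prod (measurableSet_singleton _))]
    · congr 1; ext ⟨x, b⟩; cases b <;> simp
    · exact Set.disjoint_prod.2 (.inr (by simp))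
  rw [integral_sub (integrable_const 1).integrableOn hη.integrable.integrableOn,
    setIntegral_const, ← hη.2.2.2 A hA, measureReal_def, hsplit,
    ENNReal.toReal_add (measure_ne_top _ _) (measure_ne_top _ _)]
  simp

lemma misclassRisk_eq_integral (hη : IsRegressionFunction P η)
    {g : X → Bool} (hg : MeasurableSet {x | g x = true}) :
    misclassRisk P g = ∫ x, condMisclassProb η g x ∂P.fst := by
  set A := {x | g x = true}
  have herr : {p : X × Bool | p.2 ≠ g p.1} = Aᶜ ×ˢ {true} ∪ A ×ˢ {false} := by
    ext ⟨x, b⟩; cases b <;> cases hgx : g x <;> simp [A, hgx]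
  have hdisj : Disjoint (Aᶜ ×ˢ ({true} : Set Bool)) (A ×ˢ {false}) :=
    Set.disjoint_prod.2 (.inl disjoint_compl_left)
  rw [misclassRisk, herr, measure_union hdisj (hg.prod (measurableSet_singleton _)),
    ENNReal.toReal_add (measure_ne_top _ _) (measure_ne_top _ _), hη.2.2.2 _ hg.compl,
    hη.measure_prod_false_toReal hg, ← integral_add_compl hg (hη.integrable_condMisclassProb hg),
    add_comm]
  congr 1
  · exact setIntegral_congr_fun hg fun x hx ↦ by simp_all [A, condMisclassProb]
  · exact setIntegral_congr_fun hg.compl fun x hx ↦ by simp_all [A, condMisclassProb]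

lemma ofReal_misclassRisk_plugIn_sub (hη : IsRegressionFunction P η) {f : X → ℝ}
    (hf : Measurable f) :
    ENNReal.ofReal (misclassRisk P (plugIn f) - misclassRisk P (plugIn η)) =
      ∫⁻ x, ENNReal.ofReal
        (condMisclassProb η (plugIn f) x - condMisclassProb η (plugIn η) x) ∂P.fst := by
  have hint := hη.integrable_condMisclassProb (measurableSet_plugIn_eq_true hf)
  have hint_Bayes := hη.integrable_condMisclassProb (measurableSet_plugIn_eq_true hη.1)
  rw [hη.misclassRisk_eq_integral (measurableSet_plugIn_eq_true hf),
    hη.misclassRisk_eq_integral (measurableSet_plugIn_eq_true hη.1), ← integral_sub hint hint_Bayes]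
  exact ofReal_integral_eq_lintegral_ofReal (hint.sub hint_Bayes)
    (ae_of_all _ fun x ↦ sub_nonneg.2 (condMisclassProb_plugIn_self_le η f x))

end IsRegressionFunction

theorem plugin_excess_risk_margin_decomposition_general
    (P : Measure (X × Bool)) [IsProbabilityMeasure P]
    (η : X → ℝ) (hη : IsRegressionFunction P η)
    (cM γ : ℝ)
    (hmargin : ∀ t : ℝ, 0 < t →
      (P.fst {x | 0 < |η x - 1 / 2| ∧ |η x - 1 / 2| ≤ t}).toReal ≤ cM * t ^ γ)
    (ηθ : X → ℝ) (hηθ : Measurable ηθ)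
    (δ : ℝ) (hδ : 0 < δ) :
    ENNReal.ofReal (misclassRisk P (plugIn ηθ) - misclassRisk P (plugIn η)) ≤
      ENNReal.ofReal (2 * cM * δ ^ (1 + γ)) +
        2 * ∫⁻ x, ENNReal.ofReal
          (|ηθ x - η x| * (if δ < |ηθ x - η x| then 1 else 0)) ∂P.fst := by
  set S := {x | 0 < |η x - 1 / 2| ∧ |η x - 1 / 2| ≤ δ}
  have hS : MeasurableSet S := by
    have hdist : Measurable fun x ↦ |η x - 1 / 2| := (hη.1.sub_const _).abs
    exact (measurableSet_lt measurable_const hdist).inter (measurableSet_le hdist measurable_const)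
  have hmass : ENNReal.ofReal (2 * δ) * P.fst S ≤ ENNReal.ofReal (2 * cM * δ ^ (1 + γ)) := by
    rw [← ENNReal.ofReal_toReal (measure_ne_top P.fst S), ← ENNReal.ofReal_mul (by positivity),
      rpow_add hδ, rpow_one]
    exact ENNReal.ofReal_le_ofReal (by nlinarith [hmargin δ hδ])
  calc _ = ∫⁻ x, ENNReal.ofReal
          (condMisclassProb η (plugIn ηθ) x - condMisclassProb η (plugIn η) x) ∂P.fst :=
        hη.ofReal_misclassRisk_plugIn_sub hηθ
    _ ≤ ∫⁻ x, S.indicator (fun _ ↦ ENNReal.ofReal (2 * δ)) x +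
          2 * ENNReal.ofReal (|ηθ x - η x| * if δ < |ηθ x - η x| then 1 else 0) ∂P.fst :=
        lintegral_mono fun x ↦ ofReal_condMisclassProb_plugIn_sub_le η ηθ δ x
    _ = ENNReal.ofReal (2 * δ) * P.fst S +
          2 * ∫⁻ x, ENNReal.ofReal (|ηθ x - η x| * if δ < |ηθ x - η x| then 1 else 0) ∂P.fst := by
        rw [lintegral_add_left (measurable_const.indicator hS), lintegral_indicator_const hS,
          lintegral_const_mul' _ _ ENNReal.ofNat_ne_top]
    _ ≤ _ := by gcongr

/-- **Excess risk decomposition under the margin condition**: if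
`P_x(0 < |η - 1/2| ≤ t) ≤ c_M t^γ` for all `t > 0`, then for every `δ > 0` the plug-in
rule `f_θ = 1{η_θ ≥ 1/2}` satisfies
`R(f_θ) - R(f*) ≤ 2 c_M δ^{1+γ} + 2 E_x[|η_θ - η| · 1{|η_θ - η| > δ}]`. -/
theorem plugin_excess_risk_margin_decomposition
    (P : Measure (X × Bool)) [IsProbabilityMeasure P]
    (η : X → ℝ) (hη : IsRegressionFunction P η)
    (cM γ : ℝ) (hcM : 0 < cM) (hγ : 0 ≤ γ)
    (hmargin : ∀ t : ℝ, 0 < t →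
      (P.fst {x | 0 < |η x - 1 / 2| ∧ |η x - 1 / 2| ≤ t}).toReal ≤ cM * t ^ γ)
    (ηθ : X → ℝ) (hηθ : Measurable ηθ)
    (δ : ℝ) (hδ : 0 < δ) :
    ENNReal.ofReal (misclassRisk P (plugIn ηθ) - misclassRisk P (plugIn η)) ≤
      ENNReal.ofReal (2 * cM * δ ^ (1 + γ)) +
        2 * ∫⁻ x, ENNReal.ofReal
          (|ηθ x - η x| * (if δ < |ηθ x - η x| then 1 else 0)) ∂P.fst :=
  plugin_excess_risk_margin_decomposition_general P η hη cM γ hmargin ηθ hηθ δ hδ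

end
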